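/- Fix α ∈ (0,1). Say that a set U ⊆ {0,1}^d has the α-star property if there exist |U| pairwise vertex-disjoint stars in Q^d whose centres are exactly the elements of U, each star having at least (1−α/2)d leaves. Then for all sufficiently large d (in terms of α), every integer s with d² ≤ s ≤ 2^d, and every W' ⊆ {0,1}^d with |W'| ≥ s, there exists W ⊆ W' with |W| ≥ αs/(4d) having the α-star property. -/

import Mathlib

open MeasureTheory

noncomputable section

abbrev Vtx (d : ℕ) := Fin d → ZMod 2

/-- The hypercube graph `Q^d` on vertex set `{0,1}^d`. -/
def cubeGraph (d : ℕ) : SimpleGraph (Vtx d) where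
  Adj u v := hammingDist u v = 1
  symm := by
    constructor
    intro u v h
    rwa [hammingDist_comm]
  loopless := by
    constructor
    intro u h
    simp [hammingDist_self] at h

/-- The graph `Q^d(k)`: vertices at Hamming distance exactly `k` are adjacent. -/
def distGraph (d k : ℕ) : SimpleGraph (Vtx d) where
  Adj u v := u ≠ v ∧ hammingDist u v = k
  symm := by
    constructor
    intro u v h
    exact ⟨h.1.symm, by rw [hammingDist_comm]; exact h.2⟩
  loopless := by
    constructor
    intro u h
    exact h.1 rfl

/-- Embedding of `{0,1}^d` into `ℝ^d`. -/
def toR {d : ℕ} (v : Vtx d) : Fin d → ℝ := fun i => ((v i).val : ℝ)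

/-- The set of retained vertices of a percolation configuration. -/
def retained {d : ℕ} (ω : Vtx d → Bool) : Set (Vtx d) := {v | ω v = true}

/-- `u v` is an edge of the polytope `conv S`. -/
def IsPolytopeEdge {d : ℕ} (S : Set (Vtx d)) (u v : Vtx d) : Prop :=
  u ∈ S ∧ v ∈ S ∧ u ≠ v ∧ ∃ (f : (Fin d → ℝ) →ₗ[ℝ] ℝ) (c : ℝ),
    f (toR u) = c ∧ f (toR v) = c ∧ ∀ z ∈ S, z ≠ u → z ≠ v → c < f (toR z)

/-- The graph of the polytope `conv S`. -/
def polytopeGraph {d : ℕ} (S : Set (Vtx d)) : SimpleGraph (Vtx d) where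
  Adj u v := IsPolytopeEdge S u v
  symm := by
    constructor
    rintro u v ⟨hu, hv, hne, f, c, h1, h2, h3⟩
    exact ⟨hv, hu, hne.symm, f, c, h2, h1, fun z hz z1 z2 => h3 z hz z2 z1⟩
  loopless := by
    constructor
    rintro u ⟨-, -, hne, -⟩
    exact hne rfl

/-- Degree of a vertex in a graph. -/
def deg {V : Type*} (G : SimpleGraph V) (v : V) : ℕ := {u | G.Adj v u}.ncard

/-- External neighbourhood of a set in a graph. -/
def extNbhd {V : Type*} (G : SimpleGraph V) (S : Set V) : Set V :=
  {v | v ∉ S ∧ ∃ u ∈ S, G.Adj u v}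

/-- Number of edges with exactly one endpoint in `S`. -/
def edgeBoundary {V : Type*} (G : SimpleGraph V) (S : Set V) : ℕ :=
  {p : V × V | p.1 ∈ S ∧ p.2 ∉ S ∧ G.Adj p.1 p.2}.ncard

/-- Bernoulli measure on `Bool`. -/
def bern (p : ℝ) : Measure Bool :=
  ENNReal.ofReal p • Measure.dirac true + ENNReal.ofReal (1 - p) • Measure.dirac false

instance bern_finite (p : ℝ) : IsFiniteMeasure (bern p) := by
  constructor
  simp only [bern, Measure.coe_add, Pi.add_apply, Measure.smul_apply, smul_eq_mul]
  exact ENNReal.add_lt_top.2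
    ⟨ENNReal.mul_lt_top ENNReal.ofReal_lt_top (measure_lt_top _ _),
     ENNReal.mul_lt_top ENNReal.ofReal_lt_top (measure_lt_top _ _)⟩

/-- Product Bernoulli measure: each vertex of `{0,1}^d` retained independently w.p. `p`. -/
def vertexMeasure (d : ℕ) (p : ℝ) : Measure (Vtx d → Bool) :=
  Measure.pi fun _ => bern p

/-- Product Bernoulli measure on edge configurations. -/
def edgeMeasure (d : ℕ) (q : ℝ) : Measure (Sym2 (Vtx d) → Bool) :=
  Measure.pi fun _ => bern q

/-- Joint law of independent vertex- and edge-percolation configurations. -/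
def mixedMeasure (d : ℕ) (p q : ℝ) :
    Measure ((Vtx d → Bool) × (Sym2 (Vtx d) → Bool)) :=
  (vertexMeasure d p).prod (edgeMeasure d q)

/-- The induced subgraph `Q^d_p` of the hypercube given a vertex configuration. -/
def inducedGraph (d : ℕ) (f : Vtx d → Bool) : SimpleGraph (Vtx d) where
  Adj u v := (cubeGraph d).Adj u v ∧ f u = true ∧ f v = true
  symm := by
    constructor
    rintro u v ⟨h, hu, hv⟩
    exact ⟨(cubeGraph d).adj_symm h, hv, hu⟩
  loopless := ⟨fun u h => h.1.ne rfl⟩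

/-- The mixed percolation `Q^d_{p,q}` given vertex and edge configurations. -/
def mixedGraph (d : ℕ) (f : Vtx d → Bool) (g : Sym2 (Vtx d) → Bool) :
    SimpleGraph (Vtx d) where
  Adj u v := (cubeGraph d).Adj u v ∧ f u = true ∧ f v = true ∧ g s(u, v) = true
  symm := by
    constructor
    rintro u v ⟨h, hu, hv, he⟩
    refine ⟨(cubeGraph d).adj_symm h, hv, hu, ?_⟩
    rwa [Sym2.eq_swap]
  loopless := ⟨fun u h => h.1.ne rfl⟩

/-- The subgraph of `Q^d` with vertex set `U` and edges of `F` inside `U`. -/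
def setGraph (d : ℕ) (U : Set (Vtx d)) (F : Set (Sym2 (Vtx d))) :
    SimpleGraph (Vtx d) where
  Adj u v := (cubeGraph d).Adj u v ∧ u ∈ U ∧ v ∈ U ∧ s(u, v) ∈ F
  symm := by
    constructor
    rintro u v ⟨h, hu, hv, he⟩
    refine ⟨(cubeGraph d).adj_symm h, hv, hu, ?_⟩
    rwa [Sym2.eq_swap]
  loopless := ⟨fun u h => h.1.ne rfl⟩

/-- Indicator vector `1_e ∈ F_2^d` of a set of coordinates. -/
def indic {d : ℕ} (e : Finset (Fin d)) : Vtx d := fun i => if i ∈ e then 1 else 0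

/-- The family `D_{k,m}` of sets of `m` pairwise disjoint `k`-subsets of `[d]`. -/
def Dfam (d k m : ℕ) : Set (Finset (Finset (Fin d))) :=
  {D | D.card = m ∧ (∀ e ∈ D, e.card = k) ∧
    ∀ e ∈ D, ∀ f ∈ D, e ≠ f → Disjoint e f}

/-- Vertex set of the cube `Q(D,v)`. -/
def QV {d : ℕ} (D : Finset (Finset (Fin d))) (v : Vtx d) : Set (Vtx d) :=
  {u | ∃ I : Finset (Finset (Fin d)), I ⊆ D ∧ u = v + ∑ e ∈ I, indic e}

/-- Adjacency in the cube `Q(D,v)`. -/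
def QAdj {d : ℕ} (D : Finset (Finset (Fin d))) (v : Vtx d) (u w : Vtx d) : Prop :=
  u ∈ QV D v ∧ w ∈ QV D v ∧ ∃ e ∈ D, u + w = indic e

/-- The cube `Q(D,v)` as a simple graph on the ambient vertex set. -/
def Qgraph {d : ℕ} (D : Finset (Finset (Fin d))) (v₀ : Vtx d) : SimpleGraph (Vtx d) where
  Adj u w := u ≠ w ∧ QAdj D v₀ u w
  symm := by
    constructor
    rintro u w ⟨hne, h1, h2, e, he, hs⟩
    exact ⟨hne.symm, h2, h1, e, he, by rwa [add_comm]⟩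
  loopless := ⟨fun u h => h.1 rfl⟩

/-- Edge set of the cube `Q(D,v)` as a set of unordered pairs. -/
def Qedges {d : ℕ} (D : Finset (Finset (Fin d))) (v : Vtx d) : Set (Sym2 (Vtx d)) :=
  {e | ∃ u w : Vtx d, e = s(u, w) ∧ u ≠ w ∧ QAdj D v u w}

/-- The family `Q_{k,m}` of cubes `Q(D,v)`, represented as (vertex set, edge set) pairs. -/
def CubeFam (d k m : ℕ) : Set (Set (Vtx d) × Set (Sym2 (Vtx d))) :=
  {H | ∃ D ∈ Dfam d k m, ∃ v : Vtx d, H.1 = QV D v ∧ H.2 = Qedges D v}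

/-- The auxiliary graph `G_□` on `Q_{k,m}`. -/
def Gsquare (d k m : ℕ) : SimpleGraph (CubeFam d k m) where
  Adj H H' := H ≠ H' ∧ (H.1.1 ∩ H'.1.1).ncard = 2 ^ (m - 1)
  symm := by
    constructor
    rintro H H' ⟨hne, h⟩
    exact ⟨hne.symm, by rwa [Set.inter_comm]⟩
  loopless := ⟨fun H h => h.1 rfl⟩

/-- The natural embedding of `Q^m` onto the cube `Q(D,v₀)` with directions `E 0, …, E (m-1)`. -/
def cubeEmb {d : ℕ} (m : ℕ) (E : Fin m → Finset (Fin d)) (v₀ : Vtx d) (y : Vtx m) : Vtx d :=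
  v₀ + ∑ i, y i • indic (E i)

instance setPairMS (X Y : Type*) : MeasurableSpace (Set X × Set Y) := ⊤

/-- The (vertex set, edge set) pair of the graph `H_p[P_k]` transported to `Q^m`. -/
def polyMap {d : ℕ} (m k : ℕ) (E : Fin m → Finset (Fin d)) (v₀ : Vtx d)
    (ω : Vtx d → Bool) : Set (Vtx m) × Set (Sym2 (Vtx m)) :=
  ({y | ω (cubeEmb m E v₀ y) = true},
   {e | ∃ y z : Vtx m, e = s(y, z) ∧ (cubeGraph m).Adj y z ∧
      IsPolytopeEdge (retained ω) (cubeEmb m E v₀ y) (cubeEmb m E v₀ z) ∧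
      hammingDist (cubeEmb m E v₀ y) (cubeEmb m E v₀ z) = k})

/-- The (vertex set, edge set) pair of the mixed percolation `Q^m_{p,q}`. -/
def mixMap (m : ℕ) (ω : (Vtx m → Bool) × (Sym2 (Vtx m) → Bool)) :
    Set (Vtx m) × Set (Sym2 (Vtx m)) :=
  ({y | ω.1 y = true}, (mixedGraph m ω.1 ω.2).edgeSet)

/-- The smallest subcube `Q^d[x,y]` of `Q^d` containing `x` and `y`. -/
def subcube {d : ℕ} (x y : Vtx d) : Set (Vtx d) := {z | ∀ i, x i = y i → z i = x i}

/-- `U` has the `α`-star property: pairwise vertex-disjoint stars centred at the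
elements of `U`, each with at least `(1 - α/2)d` leaves. -/
def HasStarProperty {d : ℕ} (α : ℝ) (U : Set (Vtx d)) : Prop :=
  ∃ L : Vtx d → Set (Vtx d),
    (∀ u ∈ U, (∀ w ∈ L u, (cubeGraph d).Adj u w) ∧ ((1 - α / 2) * d ≤ ((L u).ncard : ℝ))) ∧
    (∀ u ∈ U, ∀ u' ∈ U, u ≠ u' → Disjoint (insert u (L u)) (insert u' (L u')))

end


section StarAux

/-- Parity-check vectors: binary expansion of `i+1`. -/
def hvec (d m : ℕ) (i : Fin d) : Fin m → ZMod 2 :=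
  fun j => if Nat.testBit (i + 1) (j : ℕ) then 1 else 0

/-- Syndrome map. -/
def syn (d m : ℕ) (v : Vtx d) : Fin m → ZMod 2 := ∑ i, v i • hvec d m i

lemma zmod2_ne_zero_eq_one : ∀ a : ZMod 2, a ≠ 0 → a = 1 := by decide

lemma zmod2_add_eq_zero : ∀ a b : ZMod 2, a + b = 0 → a = b := by decide

lemma zmod2_ne_add_one : ∀ a : ZMod 2, a ≠ a + 1 := by decide

lemma hvec_ne_zero {d m : ℕ} (hdm : d < 2 ^ m) (i : Fin d) : hvec d m i ≠ 0 := by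
  intro h
  have hb : ∀ n : ℕ, Nat.testBit (i + 1) n = Nat.testBit 0 n := by
    intro n
    rw [Nat.zero_testBit]
    by_cases hn : n < m
    · have := congrFun h ⟨n, hn⟩
      simp only [hvec, Pi.zero_apply] at this
      by_contra hbt
      simp [Bool.not_eq_false] at hbt
      rw [hbt] at this
      simp at this
    · push_neg at hn
      apply Nat.testBit_lt_two_pow
      calc (i : ℕ) + 1 ≤ d := i.2
        _ < 2 ^ m := hdm
        _ ≤ 2 ^ n := Nat.pow_le_pow_right (by norm_num) hn
  have := Nat.eq_of_testBit_eq hb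
  omega

lemma hvec_injective {d m : ℕ} (hdm : d < 2 ^ m) : Function.Injective (hvec d m) := by
  intro i i' h
  have hb : ∀ n : ℕ, Nat.testBit (i + 1) n = Nat.testBit (i' + 1) n := by
    intro n
    by_cases hn : n < m
    · have := congrFun h ⟨n, hn⟩
      simp only [hvec] at this
      cases hbi : Nat.testBit (i + 1) n <;> cases hbi' : Nat.testBit (i' + 1) n <;>
        rw [hbi, hbi'] at this <;> simp_all
    · push_neg at hn
      have h2 : ∀ k : Fin d, Nat.testBit ((k : ℕ) + 1) n = false := by
        intro k
        apply Nat.testBit_lt_two_pow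
        calc (k : ℕ) + 1 ≤ d := k.2
          _ < 2 ^ m := hdm
          _ ≤ 2 ^ n := Nat.pow_le_pow_right (by norm_num) hn
      rw [h2 i, h2 i']
  have := Nat.eq_of_testBit_eq hb
  exact Fin.ext (by omega)

lemma syn_sub {d m : ℕ} (u v : Vtx d) : syn d m (u - v) = syn d m u - syn d m v := by
  simp only [syn, ← Finset.sum_sub_distrib, Pi.sub_apply, sub_smul]

lemma dist_ge_three {d m : ℕ} (hdm : d < 2 ^ m) {u v : Vtx d} (hne : u ≠ v)
    (hsyn : syn d m u = syn d m v) : 3 ≤ hammingDist u v := by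
  set w := u - v with hw
  have hwne : w ≠ 0 := sub_ne_zero.2 hne
  have hsw : syn d m w = 0 := by rw [hw, syn_sub, hsyn, sub_self]
  rw [hammingDist_comm, hammingDist_eq_hammingNorm, neg_add_eq_sub]
  set S := Finset.univ.filter (fun i : Fin d => w i ≠ 0) with hS
  have hcard : hammingNorm w = S.card := rfl
  have hsum : syn d m w = ∑ i ∈ S, hvec d m i := by
    rw [syn, ← Finset.sum_filter_add_sum_filter_not Finset.univ (fun i : Fin d => w i ≠ 0)]
    have h1 : ∑ i ∈ S, w i • hvec d m i = ∑ i ∈ S, hvec d m i := by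
      apply Finset.sum_congr rfl
      intro i hi
      rw [Finset.mem_filter] at hi
      rw [zmod2_ne_zero_eq_one _ hi.2, one_smul]
    have h2 : ∑ i ∈ Finset.univ.filter (fun i : Fin d => ¬ w i ≠ 0),
        w i • hvec d m i = 0 := by
      apply Finset.sum_eq_zero
      intro i hi
      rw [Finset.mem_filter] at hi
      have : w i = 0 := by simpa using hi.2
      rw [this, zero_smul]
    rw [h1, h2, add_zero]
  have hSne : S.Nonempty := by
    rw [Finset.filter_nonempty_iff]
    obtain ⟨i, hi⟩ := Function.ne_iff.1 hwne
    exact ⟨i, Finset.mem_univ i, by simpa using hi⟩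
  rw [hcard]
  by_contra hlt
  push_neg at hlt
  interval_cases h : S.card
  · exact Finset.card_ne_zero_of_mem hSne.choose_spec h
  · obtain ⟨i, hi⟩ := Finset.card_eq_one.1 h
    rw [hi, Finset.sum_singleton] at hsum
    exact hvec_ne_zero hdm i (hsum ▸ hsw)
  · obtain ⟨i, j, hij, hij2⟩ := Finset.card_eq_two.1 h
    rw [hij2, Finset.sum_pair hij] at hsum
    have : hvec d m i = hvec d m j := by
      funext k
      exact zmod2_add_eq_zero _ _ (congrFun (hsum ▸ hsw) k)
    exact hij (hvec_injective hdm this)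

/-- The canonical neighbourhood map in the cube. -/
def nbr {d : ℕ} (u : Vtx d) (i : Fin d) : Vtx d := Function.update u i (u i + 1)

lemma nbr_dist {d : ℕ} (u : Vtx d) (i : Fin d) : hammingDist u (nbr u i) = 1 := by
  have : (Finset.univ.filter fun j : Fin d => u j ≠ nbr u i j) = {i} := by
    ext j
    rw [Finset.mem_filter]
    simp only [Finset.mem_univ, true_and, Finset.mem_singleton, nbr]
    constructor
    · intro hj
      by_contra hji
      rw [Function.update_of_ne hji] at hj
      exact hj rfl
    · intro hj
      subst hj
      rw [Function.update_self]
      exact zmod2_ne_add_one _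
  rw [hammingDist, this, Finset.card_singleton]

lemma nbr_injective {d : ℕ} (u : Vtx d) : Function.Injective (nbr u) := by
  intro i i' h
  by_contra hii
  have h1 := congrFun h i
  rw [nbr, nbr, Function.update_self] at h1
  rw [Function.update_of_ne hii] at h1
  exact zmod2_ne_add_one (u i) h1.symm

end StarAux

/-- **Lemma (α-star property).** Fix `α ∈ (0,1)`. For all large `d`, every `s` with
`d² ≤ s ≤ 2^d` and every `W'` with `|W'| ≥ s`, there is `W ⊆ W'` with
`|W| ≥ αs/(4d)` having the `α`-star property. -/
theorem star_property_subset (α : ℝ) (hα : α ∈ Set.Ioo (0 : ℝ) 1) :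
    ∃ d₀ : ℕ, ∀ d : ℕ, d₀ ≤ d → ∀ s : ℕ, d ^ 2 ≤ s → s ≤ 2 ^ d →
      ∀ W' : Set (Vtx d), s ≤ W'.ncard →
      ∃ W : Set (Vtx d), W ⊆ W' ∧ α * s / (4 * d) ≤ (W.ncard : ℝ) ∧
        HasStarProperty α W := by
  refine ⟨1, fun d hd s hs1 hs2 W' hW' => ?_⟩
  have hd1 : 1 ≤ d := hd
  set m := Nat.clog 2 (d + 1) with hm
  have hdm : d < 2 ^ m := lt_of_lt_of_le (Nat.lt_succ_self d) (Nat.le_pow_clog one_lt_two _)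
  have hm1 : 1 ≤ m := Nat.clog_pos one_lt_two (by omega)
  have hm4d : 2 ^ m ≤ 4 * d := by
    have h1 : 2 ^ (m - 1) < d + 1 := Nat.pow_pred_clog_lt_self one_lt_two (by omega)
    have h2 : 2 ^ m = 2 * 2 ^ (m - 1) := by
      conv_lhs => rw [show m = (m - 1) + 1 by omega]
      ring
    omega
  have hfin : W'.Finite := Set.toFinite W'
  classical
  set F := hfin.toFinset with hF
  have hFcard : W'.ncard = F.card := Set.ncard_eq_toFinset_card W' hfin
  have hsF : s ≤ F.card := hFcard ▸ hW'
  have hs0 : 0 < s := by nlinarith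
  have hFne : F.Nonempty := Finset.card_pos.1 (by omega)
  set t := F.image (syn d m) with ht
  have htne : t.Nonempty := hFne.image _
  have hsum : F.card = ∑ y ∈ t, (F.filter fun v => syn d m v = y).card :=
    Finset.card_eq_sum_card_fiberwise fun x hx => Finset.mem_image_of_mem _ hx
  have hpig : ∃ y ∈ t, F.card ≤ t.card * (F.filter fun v => syn d m v = y).card := by
    apply Finset.exists_le_of_sum_le htne
    rw [← Finset.mul_sum, ← hsum, Finset.sum_const, smul_eq_mul]
  obtain ⟨y, _, hy⟩ := hpig
  set G := F.filter fun v => syn d m v = y with hG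
  have htcard : t.card ≤ 2 ^ m := by
    calc t.card ≤ Fintype.card (Fin m → ZMod 2) := Finset.card_le_univ t
      _ = 2 ^ m := by simp [ZMod.card]
  have hkey : s ≤ 4 * d * G.card := by
    calc s ≤ F.card := hsF
      _ ≤ t.card * G.card := hy
      _ ≤ 2 ^ m * G.card := Nat.mul_le_mul_right _ htcard
      _ ≤ 4 * d * G.card := Nat.mul_le_mul_right _ hm4d
  refine ⟨↑G, ?_, ?_, ?_⟩
  · intro x hx
    rw [Finset.mem_coe, hG, Finset.mem_filter] at hx
    exact (Set.Finite.mem_toFinset hfin).1 hx.1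
  · rw [Set.ncard_coe_finset]
    have h4d : (0 : ℝ) < 4 * d := by positivity
    rw [div_le_iff₀ h4d]
    have hc : (s : ℝ) ≤ (G.card : ℝ) * (4 * d) := by
      have h := (Nat.cast_le (α := ℝ)).2 hkey
      push_cast at h
      linarith
    calc α * s ≤ 1 * s := by
          apply mul_le_mul_of_nonneg_right hα.2.le (Nat.cast_nonneg s)
      _ = (s : ℝ) := one_mul _
      _ ≤ (G.card : ℝ) * (4 * d) := hc
  · refine ⟨fun u => ↑(Finset.univ.image (nbr u)), ?_, ?_⟩
    · intro u _
      constructor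
      · intro w hw
        rw [Finset.mem_coe, Finset.mem_image] at hw
        obtain ⟨i, _, rfl⟩ := hw
        exact nbr_dist u i
      · rw [Set.ncard_coe_finset, Finset.card_image_of_injective _ (nbr_injective u),
          Finset.card_univ, Fintype.card_fin]
        have h1 : (1 - α / 2) * d ≤ 1 * d := by
          apply mul_le_mul_of_nonneg_right _ (Nat.cast_nonneg d)
          linarith [hα.1]
        linarith
    · intro u hu u' hu' hne
      rw [Finset.mem_coe, hG, Finset.mem_filter] at hu hu'
      have hdist : 3 ≤ hammingDist u u' := dist_ge_three hdm hne (hu.2.trans hu'.2.symm)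
      rw [Set.disjoint_left]
      rintro x hx hx'
      have h1 : hammingDist u x ≤ 1 := by
        rcases hx with rfl | hx
        · rw [hammingDist_self]; omega
        · rw [Finset.mem_coe, Finset.mem_image] at hx
          obtain ⟨i, _, rfl⟩ := hx
          rw [nbr_dist]
      have h2 : hammingDist u' x ≤ 1 := by
        rcases hx' with rfl | hx'
        · rw [hammingDist_self]; omega
        · rw [Finset.mem_coe, Finset.mem_image] at hx'
          obtain ⟨i, _, rfl⟩ := hx'
          rw [nbr_dist]
      have := hammingDist_triangle u x u'
      rw [hammingDist_comm x u'] at this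
      omega
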